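/- For all real numbers A, B and every real m > 0 one has arctan((A + B)² / (m + 1)) ≤ arctan(A²) + arctan(B² / m). -/
import Mathlib

open Real

lemma arctan_add_le_of_nonneg {x y : ℝ} (hx : 0 ≤ x) (hy : 0 ≤ y) :
    Real.arctan (x + y) ≤ Real.arctan x + Real.arctan y := by
  rcases lt_or_ge (x * y) 1 with h | h
  · rw [Real.arctan_add h]
    apply Real.arctan_strictMono.monotone
    rw [le_div_iff₀ (by nlinarith)]
    nlinarith [mul_nonneg hx hy, add_nonneg hx hy]
  · have hy0 : 0 < y := by nlinarith
    have hx0 : 0 < x := by nlinarith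
    have hxy : y⁻¹ ≤ x := by
      rw [inv_le_iff_one_le_mul₀ hy0]; nlinarith
    calc Real.arctan (x + y) ≤ π / 2 := (Real.arctan_lt_pi_div_two _).le
    _ = Real.arctan y⁻¹ + Real.arctan y := by
        rw [Real.arctan_inv_of_pos hy0]; ring
    _ ≤ Real.arctan x + Real.arctan y := by
        gcongr

theorem stmt3 (A B m : ℝ) (hm : 0 < m) :
    Real.arctan ((A + B) ^ 2 / (m + 1)) ≤ Real.arctan (A ^ 2) + Real.arctan (B ^ 2 / m) := by
  have key : (A + B) ^ 2 / (m + 1) ≤ A ^ 2 + B ^ 2 / m := by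
    rw [div_le_iff₀ (by linarith)]
    have : B ^ 2 / m * m = B ^ 2 := div_mul_cancel₀ _ hm.ne'
    nlinarith [sq_nonneg (m * A - B)]
  calc Real.arctan ((A + B) ^ 2 / (m + 1)) ≤ Real.arctan (A ^ 2 + B ^ 2 / m) :=
        Real.arctan_strictMono.monotone key
  _ ≤ _ := arctan_add_le_of_nonneg (sq_nonneg A) (div_nonneg (sq_nonneg B) hm.le)
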